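/- In the polynomial ring ℚ[A][X], set s = X² − 2(A+1)·X + (A−1)² and w = X − (A+1), and define Q_k for k ≥ 1 by Q_1 = −(X³ − (3A−1)(A−3)·X + 2(A+1)(A−1)²)/4 and Q_{k+1} = (3(k+1)·X·w − s)·Q_k − X·s·Q_k′ − X·∑_{j=1}^{k−1} Q_j·Q_{k−j}, where Q′ denotes the formal derivative with respect to X. Then for every k ≥ 1, Q_k is a polynomial with coefficients in ℚ[A] whose degree in X is exactly 2k+1. -/

import Mathlib

open Polynomial

/-- The indeterminate `A`, as an element of the coefficient ring `ℚ[A]`. -/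
noncomputable def Av : Polynomial ℚ := X

/-- `s = X² − 2(A+1)X + (A−1)² ∈ ℚ[A][X]`. -/
noncomputable def sLag : Polynomial (Polynomial ℚ) :=
  X ^ 2 - C (2 * (Av + 1)) * X + C ((Av - 1) ^ 2)

/-- `w = X − (A+1) ∈ ℚ[A][X]`. -/
noncomputable def wLag : Polynomial (Polynomial ℚ) := X - C (Av + 1)

/-- The polynomials `Q_k ∈ ℚ[A][X]`:
`Q_1 = −(X³ − (3A−1)(A−3)X + 2(A+1)(A−1)²)/4` and
`Q_{k+1} = (3(k+1)·X·w − s)·Q_k − X·s·Q_k′ − X·∑_{j=1}^{k−1} Q_j·Q_{k−j}`. -/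
noncomputable def QLag : ℕ → Polynomial (Polynomial ℚ)
  | 0 => 0
  | 1 => (-(1 : ℚ) / 4) •
      (X ^ 3 - C ((3 * Av - 1) * (Av - 3)) * X + C (2 * (Av + 1) * (Av - 1) ^ 2))
  | (k + 2) =>
      ((3 * ((k : ℚ) + 2)) • (X * wLag) - sLag) * QLag (k + 1)
        - X * sLag * derivative (QLag (k + 1))
        - X * ∑ j ∈ (Finset.Ico 1 (k + 1)).attach, QLag j.1 * QLag (k + 1 - j.1)
  decreasing_by
    all_goals try (have hj := Finset.mem_Ico.mp j.2)
    all_goals omega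

namespace QLagAux

lemma ratSmul_eq (q : ℚ) (p : Polynomial (Polynomial ℚ)) : q • p = C (C q) * p := by
  rw [Algebra.smul_def]; rfl

lemma ratSmul_one (q : ℚ) : q • (1 : Polynomial ℚ) = C q := by
  rw [Algebra.smul_def, mul_one]; rfl

/-- From a degree bound and a nonzero top coefficient, get exact degree and leading coeff. -/
lemma degree_lc (p : Polynomial (Polynomial ℚ)) (n : ℕ) (h1 : p.degree ≤ (n : WithBot ℕ))
    (h2 : p.coeff n ≠ 0) : p.degree = (n : WithBot ℕ) ∧ p.leadingCoeff = p.coeff n := by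
  have hd : p.degree = (n : WithBot ℕ) := le_antisymm h1 (le_degree_of_ne_zero h2)
  exact ⟨hd, by rw [Polynomial.leadingCoeff, natDegree_eq_of_degree_eq_some hd]⟩

lemma sLag_coeff2 : sLag.coeff 2 = 1 := by
  simp only [sLag, coeff_add, coeff_sub, coeff_X_pow, coeff_C_mul, coeff_X, coeff_C]
  norm_num

lemma sLag_deg : sLag.degree = (2 : ℕ) := by
  unfold sLag
  compute_degree!

lemma sLag_lc : sLag.leadingCoeff = 1 := by
  rw [Polynomial.leadingCoeff, natDegree_eq_of_degree_eq_some sLag_deg]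
  exact sLag_coeff2

lemma wLag_deg : wLag.degree = (1 : ℕ) := by
  unfold wLag; exact_mod_cast degree_X_sub_C _

lemma wLag_coeff1 : wLag.coeff 1 = 1 := by
  simp only [wLag, coeff_sub, coeff_X, coeff_C]; norm_num

/-- Main induction: `Q_k` has degree `2k+1` and negative rational (constant) leading
coefficient. -/
lemma key : ∀ k : ℕ, 1 ≤ k → ∃ q : ℚ, q < 0 ∧
    (QLag k).degree = ((2 * k + 1 : ℕ) : WithBot ℕ) ∧ (QLag k).leadingCoeff = C q := by
  intro k
  induction k using Nat.strong_induction_on with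
  | _ k ih =>
  intro hk
  match k, hk with
  | 1, _ =>
    rw [QLag, ratSmul_eq]
    set p : Polynomial (Polynomial ℚ) :=
      X ^ 3 - C ((3 * Av - 1) * (Av - 3)) * X + C (2 * (Av + 1) * (Av - 1) ^ 2) with hp
    have hpc : p.coeff 3 = 1 := by
      simp only [hp, coeff_add, coeff_sub, coeff_X_pow, coeff_C_mul, coeff_X, coeff_C]
      norm_num
    have hpd : p.degree = (3 : ℕ) := by
      rw [hp]; compute_degree!
    have hC : (C (-(1 : ℚ) / 4) : Polynomial ℚ) ≠ 0 := by
      simp only [ne_eq, C_eq_zero]; norm_num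
    refine ⟨-(1 : ℚ) / 4, by norm_num, ?_, ?_⟩
    · rw [degree_mul, degree_C hC, hpd, zero_add]
    · rw [leadingCoeff_mul, leadingCoeff_C, Polynomial.leadingCoeff,
        natDegree_eq_of_degree_eq_some hpd, hpc, mul_one]
  | (k + 2), _ =>
    obtain ⟨q, hq, hdeg, hlc⟩ := ih (k + 1) (by omega) (by omega)
    have hnd : (QLag (k + 1)).natDegree = 2 * k + 3 := by
      have := natDegree_eq_of_degree_eq_some hdeg; omega
    have hqC : (C q : Polynomial ℚ) ≠ 0 := by
      simp only [ne_eq, C_eq_zero]; exact fun h => absurd h (ne_of_lt hq)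
    have hcoeffQ : (QLag (k + 1)).coeff (2 * k + 3) = C q := by
      rw [← hnd, ← Polynomial.leadingCoeff, hlc]
    -- the factor F
    set F : Polynomial (Polynomial ℚ) := (3 * ((k : ℚ) + 2)) • (X * wLag) - sLag with hF
    have hF' : F = C (C (3 * ((k : ℚ) + 2))) * (X * wLag) - sLag := by
      rw [hF, ratSmul_eq]
    have hFcoeff : F.coeff 2 = C (3 * (k : ℚ) + 5) := by
      rw [hF', coeff_sub, coeff_C_mul, show (2 : ℕ) = 1 + 1 from rfl, coeff_X_mul, wLag_coeff1,
        sLag_coeff2, mul_one, ← C_1, ← C_sub]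
      congr 1; ring
    have hFd : F.degree ≤ ((2 : ℕ) : WithBot ℕ) := by
      rw [hF']
      refine le_trans (degree_sub_le _ _) (max_le ?_ (le_of_eq sLag_deg))
      refine le_trans (degree_mul_le _ _) ?_
      rw [degree_mul, degree_X, wLag_deg]
      refine le_trans (add_le_add degree_C_le (le_refl _)) ?_
      decide
    have hF2 : F.degree = ((2 : ℕ) : WithBot ℕ) ∧ F.leadingCoeff = F.coeff 2 :=
      degree_lc F 2 hFd (by rw [hFcoeff]; simp only [ne_eq, C_eq_zero]; positivity)
    -- term A1
    have hA1d : (F * QLag (k + 1)).degree = ((2 * k + 5 : ℕ) : WithBot ℕ) := by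
      rw [degree_mul, hF2.1, hdeg]; push_cast; ring
    have hA1lc : (F * QLag (k + 1)).leadingCoeff = C ((3 * (k : ℚ) + 5) * q) := by
      rw [leadingCoeff_mul, hF2.2, hFcoeff, hlc, ← C_mul]
    have hA1nd : (F * QLag (k + 1)).natDegree = 2 * k + 5 :=
      natDegree_eq_of_degree_eq_some hA1d
    have hA1coeff : (F * QLag (k + 1)).coeff (2 * k + 5) = C ((3 * (k : ℚ) + 5) * q) := by
      rw [← hA1nd, ← Polynomial.leadingCoeff, hA1lc]
    -- derivative
    have hDcoeff : (derivative (QLag (k + 1))).coeff (2 * k + 2) = C (q * (2 * (k : ℚ) + 3)) := by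
      rw [coeff_derivative, show 2 * k + 2 + 1 = 2 * k + 3 from rfl, hcoeffQ]
      have hcast : ((2 * k + 2 : ℕ) : Polynomial ℚ) + 1 = C (2 * (k : ℚ) + 3) := by
        rw [← C_eq_natCast, ← C_1, ← C_add]
        congr 1; push_cast; ring
      rw [hcast, ← C_mul]
    have hDd : (derivative (QLag (k + 1))).degree ≤ ((2 * k + 2 : ℕ) : WithBot ℕ) := by
      refine le_trans degree_le_natDegree (Nat.cast_le.mpr ?_)
      have h1 := natDegree_derivative_le (QLag (k + 1))
      omega
    have hD : (derivative (QLag (k + 1))).degree = ((2 * k + 2 : ℕ) : WithBot ℕ) ∧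
        (derivative (QLag (k + 1))).leadingCoeff = (derivative (QLag (k + 1))).coeff (2 * k + 2) :=
      degree_lc _ _ hDd (by
        rw [hDcoeff]; simp only [ne_eq, C_eq_zero]
        intro h
        have h1 : (2 * (k : ℚ) + 3) > 0 := by positivity
        nlinarith)
    -- term A2
    have hA2d : (X * sLag * derivative (QLag (k + 1))).degree = ((2 * k + 5 : ℕ) : WithBot ℕ) := by
      rw [degree_mul, degree_mul, degree_X, sLag_deg, hD.1]
      push_cast; ring
    have hA2lc : (X * sLag * derivative (QLag (k + 1))).leadingCoeff
        = C (q * (2 * (k : ℚ) + 3)) := by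
      rw [leadingCoeff_mul, leadingCoeff_mul, leadingCoeff_X, sLag_lc, hD.2, hDcoeff,
        one_mul, one_mul]
    have hA2nd : (X * sLag * derivative (QLag (k + 1))).natDegree = 2 * k + 5 :=
      natDegree_eq_of_degree_eq_some hA2d
    have hA2coeff : (X * sLag * derivative (QLag (k + 1))).coeff (2 * k + 5)
        = C (q * (2 * (k : ℚ) + 3)) := by
      rw [← hA2nd, ← Polynomial.leadingCoeff, hA2lc]
    -- the sum
    set S : Polynomial (Polynomial ℚ) :=
      ∑ j ∈ (Finset.Ico 1 (k + 1)).attach, QLag j.1 * QLag (k + 1 - j.1) with hS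
    have hSax : ∃ r : ℚ, 0 ≤ r ∧ S.degree ≤ ((2 * k + 4 : ℕ) : WithBot ℕ) ∧
        S.coeff (2 * k + 4) = C r := by
      rw [hS]
      refine Finset.sum_induction _
        (fun p : Polynomial (Polynomial ℚ) => ∃ r : ℚ, 0 ≤ r ∧
          p.degree ≤ ((2 * k + 4 : ℕ) : WithBot ℕ) ∧ p.coeff (2 * k + 4) = C r) ?_ ?_ ?_
      · rintro a b ⟨r1, hr1, ha1, ha2⟩ ⟨r2, hr2, hb1, hb2⟩
        exact ⟨r1 + r2, by linarith, le_trans (degree_add_le a b) (max_le ha1 hb1),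
          by rw [coeff_add, ha2, hb2, ← C_add]⟩
      · exact ⟨0, le_refl 0, by simp, by simp⟩
      · rintro ⟨j, hj⟩ -
        obtain ⟨hj1, hj2⟩ := Finset.mem_Ico.mp hj
        obtain ⟨q1, hq1, hd1, hl1⟩ := ih j (by omega) hj1
        obtain ⟨q2, hq2, hd2, hl2⟩ := ih (k + 1 - j) (by omega) (by omega)
        have hdp : (QLag j * QLag (k + 1 - j)).degree = ((2 * k + 4 : ℕ) : WithBot ℕ) := by
          rw [degree_mul, hd1, hd2]
          rw [show ((2 * j + 1 : ℕ) : WithBot ℕ) + ((2 * (k + 1 - j) + 1 : ℕ) : WithBot ℕ)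
            = (((2 * j + 1) + (2 * (k + 1 - j) + 1) : ℕ) : WithBot ℕ) from by push_cast; ring]
          congr 1; omega
        have hlp : (QLag j * QLag (k + 1 - j)).leadingCoeff = C (q1 * q2) := by
          rw [leadingCoeff_mul, hl1, hl2, ← C_mul]
        refine ⟨q1 * q2, le_of_lt (mul_pos_of_neg_of_neg hq1 hq2), le_of_eq hdp, ?_⟩
        rw [← natDegree_eq_of_degree_eq_some hdp, ← Polynomial.leadingCoeff, hlp]
    obtain ⟨r, hr, hSd, hScoeff⟩ := hSax
    -- term A3
    have hA3d : (X * S).degree ≤ ((2 * k + 5 : ℕ) : WithBot ℕ) := by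
      refine le_trans (degree_mul_le _ _) ?_
      rw [degree_X]
      calc (1 : WithBot ℕ) + S.degree ≤ (1 : WithBot ℕ) + ((2 * k + 4 : ℕ) : WithBot ℕ) := by
            exact add_le_add_right hSd 1
        _ = ((2 * k + 5 : ℕ) : WithBot ℕ) := by push_cast; ring
    have hA3coeff : (X * S).coeff (2 * k + 5) = C r := by
      rw [show 2 * k + 5 = (2 * k + 4) + 1 from rfl, coeff_X_mul, hScoeff]
    -- put it together
    rw [QLag]
    set T : Polynomial (Polynomial ℚ) :=
      F * QLag (k + 1) - X * sLag * derivative (QLag (k + 1)) - X * S with hT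
    have hTd : T.degree ≤ ((2 * k + 5 : ℕ) : WithBot ℕ) := by
      refine le_trans (degree_sub_le _ _) (max_le (le_trans (degree_sub_le _ _)
        (max_le (le_of_eq hA1d) (le_of_eq hA2d))) hA3d)
    have hTcoeff : T.coeff (2 * k + 5) = C ((((k : ℚ)) + 2) * q - r) := by
      rw [hT, coeff_sub, coeff_sub, hA1coeff, hA2coeff, hA3coeff, ← C_sub, ← C_sub]
      congr 1; ring
    have hqr : (((k : ℚ)) + 2) * q - r < 0 := by
      have h1 : (((k : ℚ)) + 2) * q < 0 := mul_neg_of_pos_of_neg (by positivity) hq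
      linarith
    have hfin := degree_lc T (2 * k + 5) hTd (by
      rw [hTcoeff]; simp only [ne_eq, C_eq_zero]; exact ne_of_lt hqr)
    refine ⟨(((k : ℚ)) + 2) * q - r, hqr, ?_, ?_⟩
    · rw [hfin.1]
      have h9 : 2 * k + 5 = 2 * (k + 2) + 1 := by omega
      exact_mod_cast h9
    · rw [hfin.2, hTcoeff]

end QLagAux

/-- For every `k ≥ 1`, `Q_k` is a polynomial with coefficients in `ℚ[A]`
whose degree in `X` is exactly `2k+1`. -/
theorem stmt15 : ∀ k : ℕ, 1 ≤ k → (QLag k).degree = (2 * k + 1 : ℕ) := by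
  intro k hk
  obtain ⟨q, _, hdeg, _⟩ := QLagAux.key k hk
  exact hdeg
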